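/- For every ε > 0 there exists N₀ such that for all integers n ≥ N₀ and all 1 ≤ k ≤ n/2, the expanding constant of the generalised Petersen graph satisfies h(P(n,k)) < ε. That is, h(P(n,k)) → 0 as n → ∞, uniformly in k, so the generalised Petersen graphs do not form a family of expanders. -/

import Mathlib

open scoped Classical

/-- The generalised Petersen graph `P(n,k)` on vertex set `ZMod n × Bool`:
`(i, false)` is the outer vertex `a i`, `(i, true)` is the inner vertex `b i`;
edges are `a i a (i+1)`, `a i b i` and `b i b (i+k)` (indices mod `n`). -/
def petersen (n k : ℕ) : SimpleGraph (ZMod n × Bool) :=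
  SimpleGraph.fromRel fun v w =>
    (v.2 = false ∧ w.2 = false ∧ w.1 = v.1 + 1) ∨
    (v.2 = false ∧ w.2 = true ∧ w.1 = v.1) ∨
    (v.2 = true ∧ w.2 = true ∧ w.1 = v.1 + (k : ZMod n))

/-- The number of edges of `G` with exactly one endpoint in `F`. -/
noncomputable def edgeBoundary {V : Type*} (G : SimpleGraph V) (F : Finset V) : ℕ :=
  Set.ncard {e : Sym2 V | e ∈ G.edgeSet ∧ ∃ v w, e = s(v, w) ∧ v ∈ F ∧ w ∉ F}

/-- The expanding (Cheeger) constant of a finite graph: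
`h(G) = min { |∂F| / |F| : F ⊆ V, F ≠ ∅, |F| ≤ |V| / 2 }`. -/
noncomputable def expandingConstant {V : Type*} [Fintype V] (G : SimpleGraph V) : ℝ :=
  ⨅ F : {F : Finset V // F.Nonempty ∧ 2 * F.card ≤ Fintype.card V},
    (edgeBoundary G F.1 : ℝ) / (F.1.card : ℝ)

/-!
The sets `B ρ = {i + j k : |i|, |j| ≤ ρ} ⊆ ℤ/n` have at most `(2ρ + 1)²` elements, so they
cannot grow exponentially: for `R` depending only on `ε` there is `ρ < R` with
`|B (ρ + 1)| < (1 + ε / 3) |B ρ|`. Every boundary edge of `F = B ρ × {a, b}` ends in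
`(B (ρ + 1) \ B ρ) × {a, b}`, and `P(n, k)` has maximum degree `3`, so
`|∂F| ≤ 6 |B (ρ + 1) \ B ρ| < ε |F|`; once `n ≥ 2 (2R + 1)²`, `F` is at most half the graph.
-/

open Finset

namespace SimpleGraph

variable {V : Type*} [Fintype V] (G : SimpleGraph V)

theorem expandingConstant_le (F : Finset V) (hF : F.Nonempty) (hcard : 2 * #F ≤ Fintype.card V) :
    expandingConstant G ≤ edgeBoundary G F / #F :=
  ciInf_le ⟨0, by rintro _ ⟨_, rfl⟩; positivity⟩ (⟨F, hF, hcard⟩ : {F : Finset V // _})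

theorem edgeBoundary_le_card_interedges [DecidableRel G.Adj] (F : Finset V) :
    edgeBoundary G F ≤ #(G.interedges F Fᶜ) := by
  rw [edgeBoundary, ← Set.ncard_coe_finset]
  refine (Set.ncard_le_ncard ?_ (Set.toFinite _)).trans
    (Set.ncard_image_le (f := fun p : V × V => s(p.1, p.2)) (Set.toFinite _))
  rintro _ ⟨hadj, v, w, rfl, hv, hw⟩
  exact ⟨(v, w), by simpa [mem_interedges_iff] using ⟨hv, hw, hadj⟩, rfl⟩

theorem edgeBoundary_le_maxDegree_mul [DecidableRel G.Adj] (F N : Finset V)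
    (hN : ∀ v ∈ F, ∀ w ∉ F, G.Adj v w → w ∈ N) :
    edgeBoundary G F ≤ G.maxDegree * #N := by
  refine (G.edgeBoundary_le_card_interedges F).trans <|
    card_le_mul_card_image_of_maps_to (f := Prod.snd) (fun p hp => ?_) _ fun w _ => ?_
  · obtain ⟨hv, hw, hadj⟩ := G.mem_interedges_iff.1 hp
    exact hN _ hv _ (mem_compl.1 hw) hadj
  · calc #{p ∈ G.interedges F Fᶜ | p.2 = w} ≤ #(G.neighborFinset w) := by
          refine card_le_card_of_injOn Prod.fst (fun p hp => ?_) fun p hp q hq hpq => ?_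
          · simp only [coe_filter, Set.mem_ofPred_eq, mem_interedges_iff] at hp
            simpa [← hp.2] using hp.1.2.2.symm
          · simp only [coe_filter, Set.mem_ofPred_eq] at hp hq
            exact Prod.ext hpq (hp.2.trans hq.2.symm)
      _ ≤ G.maxDegree := by rw [card_neighborFinset_eq_degree]; exact G.degree_le_maxDegree w

end SimpleGraph

section LatticeBox

variable {G : Type*} [AddCommGroup G] [DecidableEq G]

noncomputable def latticeBox (a b : G) (ρ : ℕ) : Finset G :=
  (Icc (-ρ : ℤ) ρ ×ˢ Icc (-ρ : ℤ) ρ).image fun p => p.1 • a + p.2 • b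

theorem mem_latticeBox {a b : G} {ρ : ℕ} {x : G} :
    x ∈ latticeBox a b ρ ↔ ∃ i ∈ Icc (-ρ : ℤ) ρ, ∃ j ∈ Icc (-ρ : ℤ) ρ, i • a + j • b = x := by
  simp only [latticeBox, mem_image, mem_product, Prod.exists, and_assoc, exists_and_left]

variable (a b : G)

theorem card_latticeBox_le (ρ : ℕ) : #(latticeBox a b ρ) ≤ (2 * ρ + 1) ^ 2 := by
  refine card_image_le.trans_eq ?_
  rw [card_product, Int.card_Icc, sq]
  congr 1 <;> omega

theorem zero_mem_latticeBox (ρ : ℕ) : (0 : G) ∈ latticeBox a b ρ :=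
  mem_latticeBox.2 ⟨0, by simp, 0, by simp, by simp⟩

theorem latticeBox_mono {ρ σ : ℕ} (h : ρ ≤ σ) : latticeBox a b ρ ⊆ latticeBox a b σ := by
  intro x hx
  obtain ⟨i, hi, j, hj, rfl⟩ := mem_latticeBox.1 hx
  exact mem_latticeBox.2 ⟨i, Icc_subset_Icc (by omega) (by omega) hi,
    j, Icc_subset_Icc (by omega) (by omega) hj, rfl⟩

theorem mem_latticeBox_succ {a b : G} {ρ : ℕ} {x y : G} (hx : x ∈ latticeBox a b ρ)
    (hxy : y - x ∈ ({0, a, -a, b, -b} : Finset G)) : y ∈ latticeBox a b (ρ + 1) := by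
  obtain ⟨i, hi, j, hj, rfl⟩ := mem_latticeBox.1 hx
  rw [mem_Icc] at hi hj
  simp only [mem_insert, mem_singleton, sub_eq_iff_eq_add] at hxy
  rw [mem_latticeBox]
  rcases hxy with rfl | rfl | rfl | rfl | rfl
  · exact ⟨i, by simp; omega, j, by simp; omega, by simp⟩
  · exact ⟨i + 1, by simp; omega, j, by simp; omega, by rw [add_zsmul, one_zsmul]; abel⟩
  · exact ⟨i - 1, by simp; omega, j, by simp; omega, by rw [sub_zsmul, one_zsmul]; abel⟩
  · exact ⟨i, by simp; omega, j + 1, by simp; omega, by rw [add_zsmul, one_zsmul]; abel⟩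
  · exact ⟨i, by simp; omega, j - 1, by simp; omega, by rw [sub_zsmul, one_zsmul]; abel⟩

end LatticeBox

theorem exists_lt_mul_of_lt_pow {a : ℕ → ℝ} {c : ℝ} {R : ℕ} (hc : 0 ≤ c) (h0 : 1 ≤ a 0)
    (hR : a R < c ^ R) : ∃ ρ < R, a (ρ + 1) < c * a ρ := by
  by_contra! h
  have : ∀ ρ ≤ R, c ^ ρ ≤ a ρ := by
    intro ρ hρ
    induction ρ with
    | zero => simpa using h0
    | succ ρ ih =>
      calc c ^ (ρ + 1) = c * c ^ ρ := pow_succ' c ρ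
        _ ≤ c * a ρ := mul_le_mul_of_nonneg_left (ih (by omega)) hc
        _ ≤ a (ρ + 1) := h ρ (by omega)
  exact (this R le_rfl).not_gt hR

theorem exists_odd_sq_lt_pow {c : ℝ} (hc : 1 < c) : ∃ R : ℕ, ((2 * R + 1) ^ 2 : ℝ) < c ^ R := by
  obtain ⟨R, hR⟩ := ((tendsto_pow_const_div_const_pow_of_one_lt 2 hc).eventually
    (gt_mem_nhds (show (0 : ℝ) < 1 / 9 by norm_num))).exists_forall_of_atTop
  refine ⟨R + 1, ?_⟩
  have h := hR (R + 1) (by omega)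
  rw [div_lt_iff₀ (by positivity)] at h
  have hR0 : (0 : ℝ) ≤ R := R.cast_nonneg
  calc ((2 * (R + 1 : ℕ) + 1) ^ 2 : ℝ) ≤ 9 * ((R + 1 : ℕ) : ℝ) ^ 2 := by push_cast; nlinarith
    _ < c ^ (R + 1) := by linarith

section Petersen

variable {n : ℕ} (k : ℕ)

theorem petersen_adj_sub_mem {v w : ZMod n × Bool} (h : (petersen n k).Adj v w) :
    w.1 - v.1 ∈ ({0, 1, -1, (k : ZMod n), -(k : ZMod n)} : Finset (ZMod n)) := by
  obtain ⟨-, h⟩ := (SimpleGraph.fromRel_adj _ _ _).1 h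
  simp only [mem_insert, mem_singleton]
  rcases h with (⟨-, -, h⟩ | ⟨-, -, h⟩ | ⟨-, -, h⟩) | (⟨-, -, h⟩ | ⟨-, -, h⟩ | ⟨-, -, h⟩) <;>
    rw [h] <;> simp

theorem petersen_maxDegree_le [NeZero n] : (petersen n k).maxDegree ≤ 3 := by
  refine SimpleGraph.maxDegree_le_of_forall_degree_le _ _ fun v => ?_
  rw [← SimpleGraph.card_neighborFinset_eq_degree]
  obtain ⟨i, _ | _⟩ := v
  · calc _ ≤ #({(i + 1, false), (i - 1, false), (i, true)} : Finset (ZMod n × Bool)) := by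
          refine card_le_card fun w hw => ?_
          rw [SimpleGraph.mem_neighborFinset] at hw
          obtain ⟨j, _ | _⟩ := w <;> simp [petersen] at hw ⊢
          all_goals first | exact hw | exact hw.symm | rcases hw.2 with rfl | rfl <;> simp
      _ ≤ 3 := card_le_three
  · calc _ ≤ #({(i, false), (i + k, true), (i - k, true)} : Finset (ZMod n × Bool)) := by
          refine card_le_card fun w hw => ?_
          rw [SimpleGraph.mem_neighborFinset] at hw
          obtain ⟨j, _ | _⟩ := w <;> simp [petersen] at hw ⊢
          all_goals first | exact hw | exact hw.symm | rcases hw.2 with rfl | rfl <;> simp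
      _ ≤ 3 := card_le_three

theorem petersen_edgeBoundary_latticeBox_le [NeZero n] (ρ : ℕ) :
    edgeBoundary (petersen n k) (latticeBox 1 (k : ZMod n) ρ ×ˢ univ) ≤
      6 * #(latticeBox 1 (k : ZMod n) (ρ + 1) \ latticeBox 1 (k : ZMod n) ρ) := by
  set B := latticeBox (1 : ZMod n) k
  calc _ ≤ (petersen n k).maxDegree * #((B (ρ + 1) \ B ρ) ×ˢ (univ : Finset Bool)) :=
        (petersen n k).edgeBoundary_le_maxDegree_mul _ _ fun v hv w hw hvw => ?_
    _ ≤ 3 * (#(B (ρ + 1) \ B ρ) * 2) := by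
        rw [card_product, card_univ, Fintype.card_bool]
        gcongr
        exact petersen_maxDegree_le k
    _ = _ := by ring
  simp only [mem_product, mem_univ, and_true, mem_sdiff] at hv hw ⊢
  exact ⟨mem_latticeBox_succ hv (petersen_adj_sub_mem k hvw), hw⟩

theorem expandingConstant_petersen_le [NeZero n] (ρ : ℕ)
    (h : 2 * #(latticeBox 1 (k : ZMod n) ρ) ≤ n) :
    expandingConstant (petersen n k) ≤
      3 * (#(latticeBox 1 (k : ZMod n) (ρ + 1)) - #(latticeBox 1 (k : ZMod n) ρ)) /
        #(latticeBox 1 (k : ZMod n) ρ) := by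
  set B := latticeBox (1 : ZMod n) k
  have hsub : B ρ ⊆ B (ρ + 1) := latticeBox_mono 1 (k : ZMod n) ρ.le_succ
  have hF : #(B ρ ×ˢ (univ : Finset Bool)) = 2 * #(B ρ) := by
    rw [card_product, card_univ, Fintype.card_bool, mul_comm]
  calc _ ≤ (edgeBoundary (petersen n k) (B ρ ×ˢ univ) : ℝ) / #(B ρ ×ˢ univ) :=
        (petersen n k).expandingConstant_le _
          ⟨(0, false), mem_product.2 ⟨zero_mem_latticeBox _ _ _, mem_univ _⟩⟩
          (by rw [hF, Fintype.card_prod, ZMod.card, Fintype.card_bool]; omega)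
    _ ≤ 6 * (#(B (ρ + 1) \ B ρ) : ℝ) / (2 * #(B ρ)) := by
        rw [hF]
        push_cast
        gcongr
        exact_mod_cast petersen_edgeBoundary_latticeBox_le k ρ
    _ = _ := by
        rw [card_sdiff_of_subset hsub, Nat.cast_sub (card_le_card hsub)]
        ring

end Petersen

/-- The expanding constants of the generalised Petersen graphs tend to `0`
as `n → ∞`, uniformly in `k`: for every `ε > 0` there is `N₀` such that
`h(P(n,k)) < ε` whenever `n ≥ N₀` and `1 ≤ k ≤ n/2`. Hence the generalised
Petersen graphs do not form a family of expanders. -/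
theorem petersen_not_expanders (ε : ℝ) (hε : 0 < ε) :
    ∃ N₀ : ℕ, ∀ (n : ℕ) [NeZero n], ∀ k : ℕ, N₀ ≤ n → 1 ≤ k → 2 * k ≤ n →
      expandingConstant (petersen n k) < ε := by
  obtain ⟨R, hR⟩ := exists_odd_sq_lt_pow (show 1 < 1 + ε / 3 by linarith)
  refine ⟨2 * (2 * R + 1) ^ 2, fun n _ k hn _ _ => ?_⟩
  set B := latticeBox (1 : ZMod n) k
  have hB0 : 0 < #(B 0) := card_pos.2 ⟨0, zero_mem_latticeBox _ _ _⟩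
  obtain ⟨ρ, hρR, hslow⟩ := exists_lt_mul_of_lt_pow (a := fun ρ => (#(B ρ) : ℝ)) (c := 1 + ε / 3)
    (by positivity) (by exact_mod_cast hB0)
    ((Nat.cast_le.2 (card_latticeBox_le _ _ R)).trans_lt (by exact_mod_cast hR))
  have hsize : 2 * #(B ρ) ≤ n :=
    calc 2 * #(B ρ) ≤ 2 * (2 * R + 1) ^ 2 := by
          gcongr
          exact (card_le_card (latticeBox_mono _ _ hρR.le)).trans (card_latticeBox_le _ _ R)
      _ ≤ n := hn
  have hpos : (0 : ℝ) < #(B ρ) := by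
    exact_mod_cast hB0.trans_le (card_le_card (latticeBox_mono _ _ ρ.zero_le))
  calc _ ≤ 3 * ((#(B (ρ + 1)) : ℝ) - #(B ρ)) / #(B ρ) := expandingConstant_petersen_le k ρ hsize
    _ < ε := by
        rw [div_lt_iff₀ hpos]
        linarith
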